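/- For every positive integer n, the closed equilateral H-triangle of side length n + 1/(n+1) can be covered by n² + 2 closed unit equilateral H-triangles. -/

import Mathlib

noncomputable section

abbrev Pt : Type := EuclideanSpace ℝ (Fin 2)

/-- `T` is a closed equilateral H-triangle of side length `s`: the convex hull of three
points at pairwise distance `s > 0`, one side of which is parallel to the x-axis. -/
def IsEquilateralHTriangle (T : Set Pt) (s : ℝ) : Prop :=
  0 < s ∧ ∃ A B C : Pt, dist A B = s ∧ dist B C = s ∧ dist C A = s ∧ A 1 = B 1 ∧
    T = convexHull ℝ {A, B, C}

namespace Cover6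

def pt (x y : ℝ) : Pt := (WithLp.equiv 2 (Fin 2 → ℝ)).symm ![x, y]

lemma pt_zero (x y : ℝ) : pt x y 0 = x := rfl
lemma pt_one (x y : ℝ) : pt x y 1 = y := rfl

lemma pt_congr {x y x' y' : ℝ} (hx : x = x') (hy : y = y') : pt x y = pt x' y' := by
  rw [hx, hy]

lemma pt_eta (P : Pt) : pt (P 0) (P 1) = P := by
  ext i; fin_cases i <;> rfl

lemma dist_pt (x1 y1 x2 y2 : ℝ) :
    dist (pt x1 y1) (pt x2 y2) = Real.sqrt ((x1-x2)^2 + (y1-y2)^2) := by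
  rw [EuclideanSpace.dist_eq, Fin.sum_univ_two]
  congr 1 <;> simp [pt, Real.dist_eq, sq_abs]

lemma dist_pt_one {x1 y1 x2 y2 : ℝ} (h : (x1-x2)^2 + (y1-y2)^2 = 1) :
    dist (pt x1 y1) (pt x2 y2) = 1 := by
  rw [dist_pt, h, Real.sqrt_one]

lemma combo3 (a b c x1 y1 x2 y2 x3 y3 : ℝ) :
    a • pt x1 y1 + b • pt x2 y2 + c • pt x3 y3 = pt (a*x1+b*x2+c*x3) (a*y1+b*y2+c*y3) := by
  ext i; fin_cases i <;> simp [pt]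

lemma mem_hull3 {P Q R : Pt} {a b c : ℝ} (ha : 0 ≤ a) (hb : 0 ≤ b) (hc : 0 ≤ c)
    (h : a + b + c = 1) : a • P + b • Q + c • R ∈ convexHull ℝ ({P, Q, R} : Set Pt) := by
  have hP : P ∈ convexHull ℝ ({P,Q,R} : Set Pt) := subset_convexHull _ _ (by simp)
  have hQ : Q ∈ convexHull ℝ ({P,Q,R} : Set Pt) := subset_convexHull _ _ (by simp)
  have hR : R ∈ convexHull ℝ ({P,Q,R} : Set Pt) := subset_convexHull _ _ (by simp)
  have hK : Convex ℝ (convexHull ℝ ({P,Q,R} : Set Pt)) := convex_convexHull _ _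
  rcases eq_or_lt_of_le (by linarith : (0:ℝ) ≤ a + b) with h0 | h0
  · have hc1 : c = 1 := by linarith
    have ha0 : a = 0 := by linarith
    have hb0 : b = 0 := by linarith
    simpa [ha0, hb0, hc1] using hR
  · have hz : (a/(a+b)) • P + (b/(a+b)) • Q ∈ convexHull ℝ ({P,Q,R} : Set Pt) :=
      hK hP hQ (by positivity) (by positivity) (by field_simp)
    have hfin := hK hz hR (le_of_lt h0) hc (by linarith)
    have heq : (a+b) • ((a/(a+b)) • P + (b/(a+b)) • Q) + c • R = a • P + b • Q + c • R := by
      rw [smul_add, smul_smul, smul_smul, mul_div_cancel₀ _ (ne_of_gt h0),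
        mul_div_cancel₀ _ (ne_of_gt h0)]
    rwa [heq] at hfin

lemma hull3_mem {P Q R p : Pt} (hp : p ∈ convexHull ℝ ({P, Q, R} : Set Pt)) :
    ∃ a b c : ℝ, 0 ≤ a ∧ 0 ≤ b ∧ 0 ≤ c ∧ a + b + c = 1 ∧ p = a • P + b • Q + c • R := by
  rw [show ({P,Q,R} : Set Pt) = insert P {Q,R} from rfl,
    convexHull_insert ⟨Q, by simp⟩, mem_convexJoin] at hp
  obtain ⟨w, hw, z, hz, hpz⟩ := hp
  rw [Set.mem_singleton_iff] at hw
  subst hw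
  rw [convexHull_pair] at hz
  obtain ⟨b', c', hb', hc', hbc', rfl⟩ := hz
  obtain ⟨a, t, ha, ht, hat, h⟩ := hpz
  refine ⟨a, t*b', t*c', ha, by positivity, by positivity, by nlinarith, ?_⟩
  rw [← h, smul_add, smul_smul, smul_smul, add_assoc]

def R3 : ℝ := Real.sqrt 3

lemma R3_sq : R3^2 = 3 := Real.sq_sqrt (by norm_num)

def Idx (n : ℕ) := Fin (n+1) ⊕ Fin n ⊕ Fin (n-1) × Fin (n-1)

instance (n : ℕ) : Fintype (Idx n) := by unfold Idx; infer_instance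

lemma card_idx (n : ℕ) (hn : 0 < n) : Fintype.card (Idx n) = n^2 + 2 := by
  obtain ⟨k, rfl⟩ : ∃ k, n = k + 1 := ⟨n - 1, by omega⟩
  simp [Idx]
  ring

def Spec (n : ℕ) : Idx n → Bool × ℝ × ℝ
  | .inl i => (true, ((i:ℕ):ℝ)*(1 - 1/((n:ℝ)+1)), 0)
  | .inr (.inl i) => (false, ((i:ℕ):ℝ)*(1 - 1/((n:ℝ)+1)) + 1 - (1/((n:ℝ)+1))/2,
      (1/((n:ℝ)+1))/2)
  | .inr (.inr (p, q)) =>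
    if (p:ℕ) + (q:ℕ) + 1 ≤ n - 1 then
      (true, (1+1/((n:ℝ)+1))/2 + ((p:ℕ):ℝ) + ((q:ℕ):ℝ)/2, (1+1/((n:ℝ)+1))/2 + ((q:ℕ):ℝ)/2)
    else
      (false, (1+1/((n:ℝ)+1))/2 + ((n-2-(p:ℕ) : ℕ):ℝ) + 1 + ((n-2-(q:ℕ) : ℕ):ℝ)/2,
        (1+1/((n:ℝ)+1))/2 + ((n-2-(q:ℕ) : ℕ):ℝ)/2)

def InSpec : Bool × ℝ × ℝ → ℝ → ℝ → Prop
  | (true, a, B), x, Y => B ≤ Y ∧ Y - B ≤ x - a ∧ Y - B ≤ a + 1 - x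
  | (false, c, B), x, Y => Y ≤ B + 1/2 ∧ x - c ≤ Y - B ∧ c - x ≤ Y - B

def TriOf (A0 A1 σ1 σ2 : ℝ) : Bool × ℝ × ℝ → Set Pt
  | (true, a, B) => convexHull ℝ {pt (A0+σ1*a) (A1+σ2*(R3*B)),
      pt (A0+σ1*(a+1)) (A1+σ2*(R3*B)), pt (A0+σ1*(a+1/2)) (A1+σ2*(R3*(B+1/2)))}
  | (false, c, B) => convexHull ℝ {pt (A0+σ1*(c-1/2)) (A1+σ2*(R3*(B+1/2))),
      pt (A0+σ1*(c+1/2)) (A1+σ2*(R3*(B+1/2))), pt (A0+σ1*c) (A1+σ2*(R3*B))}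

lemma TriOf_isH (A0 A1 σ1 σ2 : ℝ) (h1 : σ1^2 = 1) (h2 : σ2^2 = 1) (sp : Bool × ℝ × ℝ) :
    IsEquilateralHTriangle (TriOf A0 A1 σ1 σ2 sp) 1 := by
  obtain ⟨o, a, B⟩ := sp
  have h3 : R3^2 = 3 := R3_sq
  cases o
  · exact ⟨one_pos, _, _, _,
      dist_pt_one (by linear_combination h1),
      dist_pt_one (by linear_combination (1/4)*h1 + (R3^2/4)*h2 + (1/4)*h3),
      dist_pt_one (by linear_combination (1/4)*h1 + (R3^2/4)*h2 + (1/4)*h3),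
      by rw [pt_one, pt_one], rfl⟩
  · exact ⟨one_pos, _, _, _,
      dist_pt_one (by linear_combination h1),
      dist_pt_one (by linear_combination (1/4)*h1 + (R3^2/4)*h2 + (1/4)*h3),
      dist_pt_one (by linear_combination (1/4)*h1 + (R3^2/4)*h2 + (1/4)*h3),
      by rw [pt_one, pt_one], rfl⟩

lemma mem_TriOf (A0 A1 σ1 σ2 : ℝ) (sp : Bool × ℝ × ℝ) (x Y : ℝ) (h : InSpec sp x Y) :
    pt (A0+σ1*x) (A1+σ2*(R3*Y)) ∈ TriOf A0 A1 σ1 σ2 sp := by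
  obtain ⟨o, a, B⟩ := sp
  cases o
  · obtain ⟨h1, h2, h3⟩ := h
    have hm := mem_hull3 (a := (Y-B)-(x-a)) (b := (Y-B)+(x-a)) (c := 1-2*(Y-B))
      (P := pt (A0+σ1*(a-1/2)) (A1+σ2*(R3*(B+1/2))))
      (Q := pt (A0+σ1*(a+1/2)) (A1+σ2*(R3*(B+1/2))))
      (R := pt (A0+σ1*a) (A1+σ2*(R3*B)))
      (by linarith) (by linarith) (by linarith) (by ring)
    rw [combo3] at hm
    have heq : pt (A0+σ1*x) (A1+σ2*(R3*Y)) =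
        pt (((Y-B)-(x-a))*(A0+σ1*(a-1/2)) + ((Y-B)+(x-a))*(A0+σ1*(a+1/2)) + (1-2*(Y-B))*(A0+σ1*a))
           (((Y-B)-(x-a))*(A1+σ2*(R3*(B+1/2))) + ((Y-B)+(x-a))*(A1+σ2*(R3*(B+1/2))) + (1-2*(Y-B))*(A1+σ2*(R3*B))) :=
      pt_congr (by ring) (by ring)
    rw [heq]
    exact hm
  · obtain ⟨h1, h2, h3⟩ := h
    have hm := mem_hull3 (a := (a+1-x)-(Y-B)) (b := (x-a)-(Y-B)) (c := 2*(Y-B))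
      (P := pt (A0+σ1*a) (A1+σ2*(R3*B)))
      (Q := pt (A0+σ1*(a+1)) (A1+σ2*(R3*B)))
      (R := pt (A0+σ1*(a+1/2)) (A1+σ2*(R3*(B+1/2))))
      (by linarith) (by linarith) (by linarith) (by ring)
    rw [combo3] at hm
    have heq : pt (A0+σ1*x) (A1+σ2*(R3*Y)) =
        pt (((a+1-x)-(Y-B))*(A0+σ1*a) + ((x-a)-(Y-B))*(A0+σ1*(a+1)) + (2*(Y-B))*(A0+σ1*(a+1/2)))
           (((a+1-x)-(Y-B))*(A1+σ2*(R3*B)) + ((x-a)-(Y-B))*(A1+σ2*(R3*B)) + (2*(Y-B))*(A1+σ2*(R3*(B+1/2)))) :=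
      pt_congr (by ring) (by ring)
    rw [heq]
    exact hm


lemma Spec_grid_up {n p q : ℕ} (hp' : p < n-1) (hq' : q < n-1) (h : p + q + 1 ≤ n - 1) :
    Spec n (.inr (.inr (⟨p, hp'⟩, ⟨q, hq'⟩))) =
      (true, (1+1/((n:ℝ)+1))/2 + (p:ℝ) + (q:ℝ)/2, (1+1/((n:ℝ)+1))/2 + (q:ℝ)/2) := by
  simp only [Spec]
  rw [if_pos h]

lemma Spec_grid_down {n p q : ℕ} (hp' : p < n-1) (hq' : q < n-1) (h : ¬(p + q + 1 ≤ n - 1)) :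
    Spec n (.inr (.inr (⟨p, hp'⟩, ⟨q, hq'⟩))) =
      (false, (1+1/((n:ℝ)+1))/2 + ((n-2-p : ℕ):ℝ) + 1 + ((n-2-q : ℕ):ℝ)/2,
        (1+1/((n:ℝ)+1))/2 + ((n-2-q : ℕ):ℝ)/2) := by
  simp only [Spec]
  rw [if_neg h]


set_option maxHeartbeats 1000000 in
lemma main (n : ℕ) (hn : 0 < n) (x Y : ℝ) (h0 : 0 ≤ Y) (h1 : Y ≤ x)
    (h2 : x + Y ≤ (n:ℝ) + 1/((n:ℝ)+1)) :
    ∃ j : Idx n, InSpec (Spec n j) x Y := by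
  set ν : ℝ := 1/((n:ℝ)+1) with hνdef
  clear_value ν
  have hnR : (1:ℝ) ≤ (n:ℝ) := by exact_mod_cast hn
  have hν0 : 0 < ν := by rw [hνdef]; positivity
  have hν1 : ((n:ℝ)+1)*ν = 1 := by rw [hνdef]; field_simp
  have hnν : (n:ℝ)*ν = 1 - ν := by linarith
  have hνh : ν ≤ 1/2 := by
    rw [hνdef, div_le_div_iff₀ (by linarith) (by norm_num)]; linarith
  have h1ν : 0 < 1 - ν := by linarith
  by_cases hYA : Y ≤ 1/2
  · -- bottom strip : one of the n+1 up triangles or n down triangles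
    set u := x - Y with hudef
    clear_value u
    have hu0 : 0 ≤ u := by simp only [hudef]; linarith
    set k := ⌊u/(1-ν)⌋₊ with hkdef
    have hkle : (k:ℝ)*(1-ν) ≤ u := by
      have h := Nat.floor_le (div_nonneg hu0 h1ν.le)
      calc (k:ℝ)*(1-ν) ≤ (u/(1-ν))*(1-ν) := mul_le_mul_of_nonneg_right h h1ν.le
        _ = u := div_mul_cancel₀ _ (ne_of_gt h1ν)
    have hklt : u < ((k:ℝ)+1)*(1-ν) := by
      have h := Nat.lt_floor_add_one (u/(1-ν))
      calc u = (u/(1-ν))*(1-ν) := (div_mul_cancel₀ _ (ne_of_gt h1ν)).symm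
        _ < ((k:ℝ)+1)*(1-ν) := by
            apply mul_lt_mul_of_pos_right _ h1ν
            exact_mod_cast h
    rcases le_or_gt n k with hnk | hnk
    · -- rightmost up triangle
      refine ⟨.inl ⟨n, by omega⟩, ?_, ?_, ?_⟩
      · exact h0
      · have : ((n:ℕ):ℝ)*(1-ν) ≤ (k:ℝ)*(1-ν) := by
          apply mul_le_mul_of_nonneg_right _ h1ν.le
          exact_mod_cast hnk
        simp only [hudef] at hkle
        rw [← hνdef]
        push_cast
        linarith
      · rw [← hνdef]
        push_cast
        linarith
    · by_cases hbr : x ≤ (k:ℝ)*(1-ν) + 1 - Y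
      · refine ⟨.inl ⟨k, by omega⟩, ?_, ?_, ?_⟩
        · exact h0
        · simp only [hudef] at hkle; rw [← hνdef]; push_cast; linarith
        · rw [← hνdef]; push_cast; linarith
      · push_neg at hbr
        refine ⟨.inr (.inl ⟨k, hnk⟩), ?_, ?_, ?_⟩
        · rw [← hνdef]; push_cast; linarith
        · simp only [hudef] at hklt; rw [← hνdef]; push_cast; linarith
        · rw [← hνdef]; push_cast; linarith
  · push_neg at hYA
    by_cases hYB : Y ≤ (1+ν)/2
    · -- strip down triangles
      set v := x + Y - 1 with hvdef
      clear_value v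
      have hv0 : 0 ≤ v := by simp only [hvdef]; linarith
      set k := ⌊v/(1-ν)⌋₊ with hkdef
      have hkle : (k:ℝ)*(1-ν) ≤ v := by
        have h := Nat.floor_le (div_nonneg hv0 h1ν.le)
        calc (k:ℝ)*(1-ν) ≤ (v/(1-ν))*(1-ν) := mul_le_mul_of_nonneg_right h h1ν.le
          _ = v := div_mul_cancel₀ _ (ne_of_gt h1ν)
      have hklt : v < ((k:ℝ)+1)*(1-ν) := by
        have h := Nat.lt_floor_add_one (v/(1-ν))
        calc v = (v/(1-ν))*(1-ν) := (div_mul_cancel₀ _ (ne_of_gt h1ν)).symm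
          _ < ((k:ℝ)+1)*(1-ν) := by
              apply mul_lt_mul_of_pos_right _ h1ν
              exact_mod_cast h
      rcases le_or_gt n (k+1) with hnk | hnk
      · -- i = n-1
        have hcast : (((n-1 : ℕ)):ℝ) = (n:ℝ) - 1 := by
          push_cast [Nat.cast_sub hn]; ring
        have hile : ((n:ℝ)-1)*(1-ν) ≤ v := by
          calc ((n:ℝ)-1)*(1-ν) ≤ (k:ℝ)*(1-ν) := by
                apply mul_le_mul_of_nonneg_right _ h1ν.le
                have : ((n:ℝ)) ≤ (k:ℝ)+1 := by exact_mod_cast hnk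
                linarith
            _ ≤ v := hkle
        have hige : v ≤ ((n:ℝ)-1+1)*(1-ν) := by
          simp only [hvdef]; nlinarith [hnν]
        refine ⟨.inr (.inl ⟨n-1, by omega⟩), ?_, ?_, ?_⟩
        · rw [← hνdef]; linarith
        · rw [← hνdef, hcast]; simp only [hvdef] at hige; linarith
        · rw [← hνdef, hcast]; simp only [hvdef] at hile; linarith
      · -- i = k
        refine ⟨.inr (.inl ⟨k, by omega⟩), ?_, ?_, ?_⟩
        · rw [← hνdef]; linarith
        · rw [← hνdef]; simp only [hvdef] at hklt; push_cast; linarith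
        · rw [← hνdef]; simp only [hvdef] at hkle; push_cast; linarith
    · -- grid part
      push_neg at hYB
      have hn2 : 2 ≤ n := by
        by_contra hcon
        have hne : n = 1 := by omega
        subst hne
        norm_num at h2
        linarith
      have hmcast : (((n-1 : ℕ)):ℝ) = (n:ℝ) - 1 := by
        push_cast [Nat.cast_sub hn]; ring
      set T' := Y - (1+ν)/2 with hTdef
      clear_value T'
      have hT0 : 0 ≤ T' := by simp only [hTdef]; linarith
      have hTm : 2*T' ≤ (n:ℝ) - 1 := by simp only [hTdef]; linarith
      -- obtain row number q
      obtain ⟨q, hqm, hq2T, hR12⟩ :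
          ∃ q : ℕ, q + 1 ≤ n - 1 ∧ ((q:ℕ):ℝ) ≤ 2*T' ∧ T' - ((q:ℕ):ℝ)/2 ≤ 1/2 := by
        set kq := ⌊2*T'⌋₊ with hkqdef
        rcases le_or_gt (kq + 1) (n-1) with hq | hq
        · refine ⟨kq, hq, Nat.floor_le (by linarith), ?_⟩
          have hlt := Nat.lt_floor_add_one (2*T')
          rw [← hkqdef] at hlt
          linarith
        · refine ⟨n-2, by omega, ?_, ?_⟩
          · have h1' : ((n-2:ℕ):ℝ) ≤ (kq:ℝ) := by
              have : (n-2:ℕ) ≤ kq := by omega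
              exact_mod_cast this
            have h2' := Nat.floor_le (show (0:ℝ) ≤ 2*T' by linarith)
            linarith
          · have hc2 : ((n-2:ℕ):ℝ) = (n:ℝ) - 2 := by
              push_cast [Nat.cast_sub (show 2 ≤ n from hn2)]; ring
            rw [hc2]; linarith
      set w := x - Y with hwdef
      clear_value w
      have hw0 : 0 ≤ w := by simp only [hwdef]; linarith
      have hwmax : w ≤ (n:ℝ) - 1 - 2*T' := by
        simp only [hwdef, hTdef]; linarith
      set kp := ⌊w⌋₊ with hkpdef
      have hpw1 : (kp:ℝ) ≤ w := Nat.floor_le hw0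
      have hwlt : w < (kp:ℝ) + 1 := by
        have := Nat.lt_floor_add_one w
        exact_mod_cast this
      set R := T' - ((q:ℕ):ℝ)/2 with hRdef
      clear_value R
      have hR0 : 0 ≤ R := by simp only [hRdef]; linarith
      have hxeq : x = (1+ν)/2 + (q:ℝ)/2 + R + w := by
        simp only [hRdef, hTdef, hwdef]; ring
      rcases le_or_gt (n - 1 - q) (kp + 1) with hcase | hcase
      · -- p = n-2-q = m-q-1, up triangle, rightmost in its row
        have hple : ((n-2-q:ℕ):ℝ) ≤ (kp:ℝ) := by
          have : (n-2-q:ℕ) ≤ kp := by omega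
          exact_mod_cast this
        have hpcast : ((n-2-q:ℕ):ℝ) = (n:ℝ) - 2 - q := by
          push_cast [Nat.cast_sub (show q ≤ n - 2 by omega), Nat.cast_sub hn2]; ring
        refine ⟨.inr (.inr (⟨n-2-q, by omega⟩, ⟨q, by omega⟩)), ?_⟩
        rw [Spec_grid_up _ _ (by omega)]
        refine ⟨?_, ?_, ?_⟩
        · rw [← hνdef]; simp only [hTdef] at hq2T; linarith
        · rw [← hνdef, hpcast]; rw [hxeq]; linarith [hpw1, hple, hpcast]
        · rw [← hνdef, hpcast]; rw [hxeq]; linarith [hwmax]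
      · -- p = kp
        by_cases hbr : w ≤ (kp:ℝ) + 1 - 2*R
        · -- up triangle
          refine ⟨.inr (.inr (⟨kp, by omega⟩, ⟨q, by omega⟩)), ?_⟩
          rw [Spec_grid_up _ _ (by omega)]
          refine ⟨?_, ?_, ?_⟩
          · rw [← hνdef]; simp only [hTdef] at hq2T; linarith
          · rw [← hνdef]; rw [hxeq]; linarith
          · rw [← hνdef]; rw [hxeq]; linarith
        · -- down triangle
          push_neg at hbr
          refine ⟨.inr (.inr (⟨n-2-kp, by omega⟩, ⟨n-2-q, by omega⟩)), ?_⟩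
          rw [Spec_grid_down _ _ (by omega)]
          have e1 : n-2-(n-2-kp) = kp := by omega
          have e2 : n-2-(n-2-q) = q := by omega
          rw [e1, e2, ← hνdef]
          refine ⟨?_, ?_, ?_⟩
          · linarith
          · rw [hxeq]; linarith
          · rw [hxeq]; linarith

end Cover6

open Cover6 in
set_option maxHeartbeats 1000000 in
theorem statement6 (n : ℕ) (hn : 0 < n)
    (T : Set Pt) (hT : IsEquilateralHTriangle T ((n : ℝ) + 1 / ((n : ℝ) + 1))) :
    ∃ S : Fin (n ^ 2 + 2) → Set Pt,
      (∀ i, IsEquilateralHTriangle (S i) 1) ∧ T ⊆ ⋃ i, S i := by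
  obtain ⟨hs0, A, B, C, hAB, hBC, hCA, hABy, hTeq⟩ := hT
  set s : ℝ := (n:ℝ) + 1/((n:ℝ)+1) with hsdef
  clear_value s
  have hsne : s ≠ 0 := ne_of_gt hs0
  have hds : ∀ P Q : Pt, dist P Q = Real.sqrt ((P 0 - Q 0)^2 + (P 1 - Q 1)^2) := by
    intro P Q
    rw [EuclideanSpace.dist_eq, Fin.sum_univ_two]
    congr 1 <;> simp [Real.dist_eq, sq_abs]
  have sq_of_dist : ∀ P Q : Pt, dist P Q = s → (P 0 - Q 0)^2 + (P 1 - Q 1)^2 = s^2 := by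
    intro P Q h
    have h2 := congrArg (·^2) h
    rw [hds P Q, Real.sq_sqrt (by positivity)] at h2
    exact h2
  have sqAB := sq_of_dist A B hAB
  have sqBC := sq_of_dist B C hBC
  have sqCA := sq_of_dist C A hCA
  have hABx : (B 0 - A 0)^2 = s^2 := by
    rw [hABy] at sqAB
    linear_combination sqAB
  set σ1 : ℝ := (B 0 - A 0)/s with hσ1def
  have hσ1 : σ1^2 = 1 := by
    rw [hσ1def, div_pow, hABx, div_self (by positivity)]
  have hB0 : B 0 = A 0 + σ1*s := by
    rw [hσ1def, div_mul_cancel₀ _ hsne]; ring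
  clear_value σ1
  have hR3 := R3_sq
  have hR30 : (0:ℝ) < R3 := Real.sqrt_pos.mpr (by norm_num)
  have hC0 : C 0 = A 0 + σ1*(s/2) := by
    have key : s^2 = 2*σ1*s*(C 0 - A 0) := by
      rw [hB0, ← hABy] at sqBC
      linear_combination sqBC - sqCA - s^2*hσ1
    have key2 : s*(σ1*s - 2*(C 0 - A 0)) = 0 := by
      linear_combination σ1*key + 2*s*(C 0 - A 0)*hσ1
    rcases mul_eq_zero.mp key2 with h | h
    · exact absurd h hsne
    · linarith
  have hv2 : (C 1 - A 1)^2 = 3/4*s^2 := by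
    linear_combination sqCA - (C 0 - A 0 + σ1*(s/2))*hC0 - (s^2/4)*hσ1
  set σ2 : ℝ := (C 1 - A 1)/(R3*(s/2)) with hσ2def
  have hσ2 : σ2^2 = 1 := by
    have hden : (R3*(s/2))^2 = 3/4*s^2 := by rw [mul_pow, hR3]; ring
    have h34 : (0:ℝ) < 3/4*s^2 := by nlinarith [hs0]
    rw [hσ2def, div_pow, hv2, hden, div_self (ne_of_gt h34)]
  have hC1 : C 1 = A 1 + σ2*(R3*(s/2)) := by
    rw [hσ2def, div_mul_cancel₀ _ (by positivity)]; ring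
  clear_value σ2
  set e : Idx n ≃ Fin (n^2+2) := Fintype.equivFinOfCardEq (card_idx n hn) with hedef
  refine ⟨fun i => TriOf (A 0) (A 1) σ1 σ2 (Spec n (e.symm i)),
    fun i => TriOf_isH _ _ _ _ hσ1 hσ2 _, ?_⟩
  intro p hp
  rw [hTeq] at hp
  obtain ⟨α, β, γ, hα, hβ, hγ, hsum, hcombo⟩ := hull3_mem hp
  have hsum_s : α*s + β*s + γ*s = s := by linear_combination s*hsum
  obtain ⟨j, hj⟩ := main n hn (β*s + γ*(s/2)) (γ*(s/2))
    (by positivity)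
    (by linarith [mul_nonneg hβ hs0.le])
    (by rw [← hsdef]; linarith [mul_nonneg hα hs0.le, hsum_s])
  have hmem := mem_TriOf (A 0) (A 1) σ1 σ2 (Spec n j) _ _ hj
  have hp_eq : p = pt (A 0 + σ1*(β*s + γ*(s/2))) (A 1 + σ2*(R3*(γ*(s/2)))) := by
    have hApt : A = pt (A 0) (A 1) := (pt_eta A).symm
    have hBpt : B = pt (A 0 + σ1*s) (A 1) := by
      rw [← pt_eta B, hB0, ← hABy]
    have hCpt : C = pt (A 0 + σ1*(s/2)) (A 1 + σ2*(R3*(s/2))) := by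
      rw [← pt_eta C, hC0, hC1]
    rw [hApt] at hcombo
    rw [hBpt] at hcombo
    rw [hCpt] at hcombo
    rw [hcombo, combo3]
    exact pt_congr (by linear_combination (A 0)*hsum) (by linear_combination (A 1)*hsum)
  rw [hp_eq]
  refine Set.mem_iUnion.mpr ⟨e j, ?_⟩
  simpa only [Equiv.symm_apply_apply] using hmem
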